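/- Let λ > 0, λ ≠ 1, and in ℝ³ consider X = octahedron {±e_i} with weight 1, cuboctahedron (r_2/√2)·I³_2 with r_2 = √((2λ+3)/(5λ)) and weight 100λ³/(2λ+3)³, and cube (r_3/√3)·{-1,1}³ with r_3 = √((2λ+3)/5) and weight 675/(8(2λ+3)³). Then (X,w) is a Euclidean 7-design of 26 points in ℝ³, i.e., Σ_{x∈X} w(x)‖x‖^{2s_1} f(x) = 0 for all homogeneous harmonic f of degree s with 1 ≤ s ≤ 7-2s_1, s_1 ≥ 0. -/

import Mathlib

/-!
A weighted point set annihilates every harmonic homogeneous polynomial `f` of degree `s ≥ 1` as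
soon as its degree-`s` moments `∑ w(x) x^α` are proportional to the moments `∏ (αᵢ - 1)‼` of the
standard Gaussian: Gaussian integration by parts and Euler's identity give `s · E[f] = E[Δf] = 0`.
The factor `‖x‖^{2s₁}` is constant on each of the three shells and only rescales its weight. All
three shells are invariant under sign changes of the coordinates, so moments with an odd exponent
vanish; for `s = 2, 4, 6` the weights make the remaining moments proportional to the Gaussian ones
(`x⁴ : x²y² = 3 : 1` and `x⁶ : x⁴y² : x²y²z² = 15 : 3 : 1`), which is a finite computation.
-/

/-- The set `I^n_k` of vectors in `{-1,0,1}^n ⊂ ℝⁿ` with squared norm `k`. -/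
noncomputable def boxLayer (n k : ℕ) : Finset (Fin n → ℝ) :=
  (Fintype.piFinset fun _ : Fin n => ({-1, 0, 1} : Finset ℝ)).filter
    fun x => ∑ i, x i ^ 2 = k

open MvPolynomial
open scoped Nat

/-- `E[Z ^ k]` for a standard normal `Z` (at `k = 0` the truncated `k - 1` gives `0‼ = 1`). -/
def gaussMoment (k : ℕ) : ℝ := if Even k then ((k - 1)‼ : ℝ) else 0

lemma gaussMoment_of_odd {k : ℕ} (hk : Odd k) : gaussMoment k = 0 := by
  simp [gaussMoment, Nat.not_even_iff_odd.mpr hk]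

lemma gaussMoment_succ (k : ℕ) : gaussMoment (k + 1) = k * gaussMoment (k - 1) := by
  rcases k with _ | k
  · simp [gaussMoment]
  · simp only [gaussMoment, Nat.add_sub_cancel, Nat.even_add_one, not_not]
    split_ifs <;> simp [Nat.doubleFactorial_add_one]

namespace MvPolynomial

section Evaluation

variable {σ R : Type*} [Fintype σ] [CommSemiring R]

lemma IsHomogeneous.eval_smul {f : MvPolynomial σ R} {s : ℕ} (hf : f.IsHomogeneous s)
    (c : R) (x : σ → R) : eval (c • x) f = c ^ s * eval x f := by
  rw [eval_eq', eval_eq', Finset.mul_sum]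
  refine Finset.sum_congr rfl fun d hd => ?_
  have hdeg : d.degree = s := (hf.degree_eq_sum_deg_support hd).symm
  simp only [Pi.smul_apply, smul_eq_mul, mul_pow, Finset.prod_mul_distrib,
    Finset.prod_pow_eq_pow_sum, ← Finsupp.degree_eq_sum, hdeg]
  ring

lemma sum_eval_eq_sum_coeff_mul {ι : Type*} (J : Finset ι) (p : ι → σ → R)
    (f : MvPolynomial σ R) :
    ∑ j ∈ J, eval (p j) f = ∑ d ∈ f.support, coeff d f * ∑ j ∈ J, ∏ i, p j i ^ d i := by
  simp only [eval_eq', Finset.mul_sum]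
  exact Finset.sum_comm

end Evaluation

section Gaussian

variable {σ : Type*} [Fintype σ]

/-- `E[f(Z)]` for a standard Gaussian vector `Z`, computed from the moments. -/
noncomputable def gaussianMean : MvPolynomial σ ℝ →ₗ[ℝ] ℝ :=
  (basisMonomials σ ℝ).constr ℝ fun d => ∏ i, gaussMoment (d i)

lemma gaussianMean_monomial (d : σ →₀ ℕ) (c : ℝ) :
    gaussianMean (monomial d c) = c * ∏ i, gaussMoment (d i) := by
  have : monomial d c = c • basisMonomials σ ℝ d := by
    rw [coe_basisMonomials, smul_monomial, smul_eq_mul, mul_one]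
  rw [this, map_smul, gaussianMean, Module.Basis.constr_basis, smul_eq_mul]

lemma gaussianMean_apply (f : MvPolynomial σ ℝ) :
    gaussianMean f = ∑ d ∈ f.support, coeff d f * ∏ i, gaussMoment (d i) := by
  conv_lhs => rw [f.as_sum]
  simp only [map_sum, gaussianMean_monomial]

lemma prod_gaussMoment_single_add (i : σ) (d : σ →₀ ℕ) :
    ∏ j, gaussMoment ((Finsupp.single i 1 + d : σ →₀ ℕ) j) =
      d i * ∏ j, gaussMoment ((d - Finsupp.single i 1 : σ →₀ ℕ) j) := by
  classical
  rw [← Finset.mul_prod_erase _ _ (Finset.mem_univ i),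
    ← Finset.mul_prod_erase _ _ (Finset.mem_univ i), ← mul_assoc]
  congr 1
  · simp [add_comm 1, gaussMoment_succ]
  · refine Finset.prod_congr rfl fun j hj => ?_
    simp [(Finset.ne_of_mem_erase hj).symm]

/-- Gaussian integration by parts, `E[Zᵢ p(Z)] = E[∂ᵢ p(Z)]`. -/
lemma gaussianMean_X_mul (i : σ) (p : MvPolynomial σ ℝ) :
    gaussianMean (X i * p) = gaussianMean (pderiv i p) := by
  induction p using MvPolynomial.induction_on' with
  | monomial d c =>
    rw [← pow_one (X i), ← monomial_single_add, pderiv_monomial, gaussianMean_monomial,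
      gaussianMean_monomial, prod_gaussMoment_single_add, mul_assoc]
  | add p q hp hq => simp only [mul_add, map_add, hp, hq]

theorem gaussianMean_eq_zero_of_isHomogeneous {f : MvPolynomial σ ℝ} {s : ℕ}
    (hf : f.IsHomogeneous s) (hs : s ≠ 0) (hΔ : ∑ i, pderiv i (pderiv i f) = 0) :
    gaussianMean f = 0 := by
  have : (s : ℝ) * gaussianMean f = 0 := by
    calc (s : ℝ) * gaussianMean f = gaussianMean (s • f) := by
          rw [map_nsmul, nsmul_eq_mul]
      _ = ∑ i, gaussianMean (pderiv i (pderiv i f)) := by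
          simp only [← hf.sum_X_mul_pderiv, map_sum, gaussianMean_X_mul]
      _ = 0 := by rw [← map_sum, hΔ, map_zero]
  simpa [hs] using this

theorem sum_coeff_mul_eq_zero_of_eq_mul_gaussMoment {f : MvPolynomial σ ℝ} {s : ℕ}
    (hf : f.IsHomogeneous s) (hs : s ≠ 0) (hΔ : ∑ i, pderiv i (pderiv i f) = 0)
    {T : (σ →₀ ℕ) → ℝ} {κ : ℝ}
    (hT : ∀ d : σ →₀ ℕ, d.degree = s → T d = κ * ∏ i, gaussMoment (d i)) :
    ∑ d ∈ f.support, coeff d f * T d = 0 := by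
  calc ∑ d ∈ f.support, coeff d f * T d = κ * gaussianMean f := by
        rw [gaussianMean_apply, Finset.mul_sum]
        refine Finset.sum_congr rfl fun d hd => ?_
        rw [hT d (hf.degree_eq_sum_deg_support hd).symm]
        ring
    _ = 0 := by rw [gaussianMean_eq_zero_of_isHomogeneous hf hs hΔ, mul_zero]

end Gaussian

end MvPolynomial

/-- `∑_{t = ±1} t ^ k`. -/
def signSum (k : ℕ) : ℝ := 1 + (-1) ^ k

/- The moments `∑ x₀ ^ a * x₁ ^ b * x₂ ^ c` over the three shells: a coordinate running over
`±1` contributes `signSum`, a vanishing one contributes `0 ^ k`. -/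
def octahedronMoment (a b c : ℕ) : ℝ :=
  signSum a * 0 ^ b * 0 ^ c + 0 ^ a * signSum b * 0 ^ c + 0 ^ a * 0 ^ b * signSum c

def cuboctahedronMoment (a b c : ℕ) : ℝ :=
  signSum a * signSum b * 0 ^ c + signSum a * 0 ^ b * signSum c + 0 ^ a * signSum b * signSum c

def cubeMoment (a b c : ℕ) : ℝ := signSum a * signSum b * signSum c

lemma sum_octahedron_prod_pow (d : Fin 3 → ℕ) :
    ∑ i : Fin 3, ∏ j, (Pi.single i 1 : Fin 3 → ℝ) j ^ d j
      + ∑ i : Fin 3, ∏ j, (-Pi.single i 1 : Fin 3 → ℝ) j ^ d j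
      = octahedronMoment (d 0) (d 1) (d 2) := by
  simp only [Fin.sum_univ_three, Fin.prod_univ_three, Pi.neg_apply, Pi.single_eq_same,
    Pi.single_eq_of_ne, ne_eq, Fin.reduceEq, not_false_eq_true, neg_zero, one_pow,
    octahedronMoment, signSum]
  ring

lemma sum_piFinset_fin_three {α β : Type*} [AddCommMonoid β] (t : Finset α)
    (F : (Fin 3 → α) → β) :
    ∑ x ∈ Fintype.piFinset (fun _ : Fin 3 => t), F x =
      ∑ a ∈ t, ∑ b ∈ t, ∑ c ∈ t, F ![a, b, c] := by
  rw [← Finset.sum_product', ← Finset.sum_product']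
  refine Finset.sum_nbij' (fun x => ((x 0, x 1), x 2)) (fun p => ![p.1.1, p.1.2, p.2])
    (fun x hx => ?_) (fun p hp => ?_) (fun x _ => ?_) (fun _ _ => rfl) (fun x _ => ?_)
  · simp_all [Fintype.mem_piFinset]
  · simp only [Finset.mem_product] at hp
    simp [Fintype.mem_piFinset, Fin.forall_fin_succ, hp]
  · funext i; fin_cases i <;> rfl
  · congr 1; funext i; fin_cases i <;> rfl

lemma sum_boxLayer_prod_pow (d : Fin 3 → ℕ) :
    ∑ x ∈ boxLayer 3 2, ∏ i, x i ^ d i = cuboctahedronMoment (d 0) (d 1) (d 2) := by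
  rw [boxLayer, Finset.sum_filter, sum_piFinset_fin_three]
  norm_num [Finset.sum_insert, Fin.sum_univ_three, Fin.prod_univ_three, Matrix.cons_val_two,
    Matrix.tail_cons, Matrix.head_cons, cuboctahedronMoment, signSum]
  ring

lemma sum_cube_prod_pow (d : Fin 3 → ℕ) :
    ∑ ε ∈ Fintype.piFinset (fun _ : Fin 3 => ({-1, 1} : Finset ℝ)), ∏ i, ε i ^ d i
      = cubeMoment (d 0) (d 1) (d 2) := by
  have h (k : ℕ) : ∑ t ∈ ({-1, 1} : Finset ℝ), t ^ k = signSum k := by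
    rw [Finset.sum_pair (by norm_num), one_pow, add_comm, signSum]
  rw [Finset.sum_prod_piFinset _ fun i t => t ^ d i, Fin.prod_univ_three, h, h, h, cubeMoment]

def octCuboctCubeMoment (w₂ w₃ : ℝ) (a b c : ℕ) : ℝ :=
  octahedronMoment a b c + w₂ * cuboctahedronMoment a b c + w₃ * cubeMoment a b c

lemma sum_eval_octahedron_cuboctahedron_cube {f : MvPolynomial (Fin 3) ℝ} {s : ℕ}
    (hf : f.IsHomogeneous s) (w₂ w₃ c₂ c₃ : ℝ) :
    (∑ i : Fin 3, (eval (Pi.single i 1) f + eval (-Pi.single i 1) f))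
      + ∑ x ∈ boxLayer 3 2, w₂ * eval (fun i => c₂ * x i) f
      + ∑ ε ∈ Fintype.piFinset (fun _ : Fin 3 => ({-1, 1} : Finset ℝ)),
          w₃ * eval (fun i => c₃ * ε i) f
      = ∑ d ∈ f.support, coeff d f *
          octCuboctCubeMoment (w₂ * c₂ ^ s) (w₃ * c₃ ^ s) (d 0) (d 1) (d 2) := by
  have hscale (c : ℝ) (x : Fin 3 → ℝ) : eval (fun i => c * x i) f = c ^ s * eval x f :=
    hf.eval_smul c x
  simp only [hscale, ← mul_assoc, ← Finset.mul_sum, Finset.sum_add_distrib,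
    sum_eval_eq_sum_coeff_mul, sum_boxLayer_prod_pow, sum_cube_prod_pow]
  rw [← Finset.sum_add_distrib, Finset.mul_sum, Finset.mul_sum, ← Finset.sum_add_distrib,
    ← Finset.sum_add_distrib]
  refine Finset.sum_congr rfl fun d _ => ?_
  rw [octCuboctCubeMoment, ← sum_octahedron_prod_pow]
  ring

lemma octCuboctCubeMoment_eq_zero (w₂ w₃ : ℝ) {a b c : ℕ} (h : Odd a ∨ Odd b ∨ Odd c) :
    octCuboctCubeMoment w₂ w₃ a b c = 0 := by
  have key {k : ℕ} (hk : Odd k) : signSum k = 0 ∧ (0 : ℝ) ^ k = 0 :=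
    ⟨by simp [signSum, hk.neg_one_pow], zero_pow hk.pos.ne'⟩
  rcases h with h | h | h <;>
    simp [octCuboctCubeMoment, octahedronMoment, cuboctahedronMoment, cubeMoment, key h]

/-- The weights are those of the two outer shells times `r ^ (2 * s₁)` and the scaling
`(r / √n) ^ (2 * t)`, expressed through `l`. -/
lemma exists_octCuboctCubeMoment_eq_mul_gaussMoment {l : ℝ} (hl : 0 < l) {t s₁ : ℕ}
    (ht : 1 ≤ t) (hts : t + s₁ ≤ 3) :
    ∃ κ : ℝ, ∀ a b c : ℕ, a + b + c = 2 * t →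
      octCuboctCubeMoment
        (100 * l ^ 3 / (2 * l + 3) ^ 3 * ((2 * l + 3) / (5 * l)) ^ s₁ *
          ((2 * l + 3) / (10 * l)) ^ t)
        (675 / (8 * (2 * l + 3) ^ 3) * ((2 * l + 3) / 5) ^ s₁ * ((2 * l + 3) / 15) ^ t) a b c
      = κ * (gaussMoment a * gaussMoment b * gaussMoment c) := by
  generalize hW₂ : 100 * l ^ 3 / (2 * l + 3) ^ 3 * ((2 * l + 3) / (5 * l)) ^ s₁ *
    ((2 * l + 3) / (10 * l)) ^ t = W₂
  generalize hW₃ : 675 / (8 * (2 * l + 3) ^ 3) * ((2 * l + 3) / 5) ^ s₁ *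
    ((2 * l + 3) / 15) ^ t = W₃
  refine ⟨octCuboctCubeMoment W₂ W₃ (2 * t) 0 0 / gaussMoment (2 * t), fun a b c h => ?_⟩
  by_cases hodd : Odd a ∨ Odd b ∨ Odd c
  · rw [octCuboctCubeMoment_eq_zero _ _ hodd]
    rcases hodd with h | h | h <;> simp [gaussMoment_of_odd h]
  simp only [not_or, Nat.not_odd_iff_even] at hodd
  obtain ⟨⟨a, rfl⟩, ⟨b, rfl⟩, ⟨c, rfl⟩⟩ := hodd
  have hl' : l ≠ 0 := hl.ne'
  have hP : 2 * l + 3 ≠ 0 := by positivity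
  have hc : c = t - a - b := by omega
  subst hc
  have ha : a ≤ t := by omega
  have hb : b ≤ t - a := by omega
  have ht3 : t ≤ 3 := by omega
  have hs₁ : s₁ ≤ 3 - t := by omega
  subst hW₂ hW₃
  interval_cases t <;> interval_cases s₁ <;> interval_cases a <;> interval_cases b <;>
    simp [octCuboctCubeMoment, octahedronMoment, cuboctahedronMoment, cubeMoment, signSum,
      gaussMoment, Nat.even_iff, Nat.doubleFactorial] <;> field_simp <;> ring

lemma exists_octCuboctCubeMoment_eq_mul_prod_gaussMoment {l r₂ r₃ : ℝ} (hl : 0 < l)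
    (hr₂ : r₂ ^ 2 = (2 * l + 3) / (5 * l)) (hr₃ : r₃ ^ 2 = (2 * l + 3) / 5) {s s₁ : ℕ}
    (hs : 1 ≤ s) (hts : s + 2 * s₁ ≤ 7) :
    ∃ κ : ℝ, ∀ d : Fin 3 →₀ ℕ, d.degree = s →
      octCuboctCubeMoment (100 * l ^ 3 / (2 * l + 3) ^ 3 * r₂ ^ (2 * s₁) * (r₂ / √2) ^ s)
        (675 / (8 * (2 * l + 3) ^ 3) * r₃ ^ (2 * s₁) * (r₃ / √3) ^ s) (d 0) (d 1) (d 2)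
      = κ * ∏ i, gaussMoment (d i) := by
  simp only [Finsupp.degree_eq_sum, Fin.sum_univ_three, Fin.prod_univ_three]
  rcases Nat.even_or_odd s with ⟨t, rfl⟩ | hodd
  · have hq₂ : (r₂ / √2) ^ 2 = (2 * l + 3) / (10 * l) := by
      rw [div_pow, hr₂, Real.sq_sqrt zero_le_two]; ring
    have hq₃ : (r₃ / √3) ^ 2 = (2 * l + 3) / 15 := by
      rw [div_pow, hr₃, Real.sq_sqrt zero_le_three]; ring
    obtain ⟨κ, hκ⟩ := exists_octCuboctCubeMoment_eq_mul_gaussMoment hl (t := t) (s₁ := s₁)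
      (by omega) (by omega)
    refine ⟨κ, fun d hd => ?_⟩
    rw [← two_mul, pow_mul, pow_mul, pow_mul, pow_mul, hr₂, hr₃, hq₂, hq₃]
    exact hκ (d 0) (d 1) (d 2) (by omega)
  · refine ⟨0, fun d hd => ?_⟩
    have hodd' : Odd (d 0) ∨ Odd (d 1) ∨ Odd (d 2) := by
      subst hd
      simp only [Nat.odd_iff] at hodd ⊢
      omega
    rw [zero_mul, octCuboctCubeMoment_eq_zero _ _ hodd']

open MvPolynomial in
theorem oct_cuboct_cube_tight_7design_general (l : ℝ) (hl : 0 < l)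
    (r₂ r₃ : ℝ) (hr₂ : r₂ = Real.sqrt ((2 * l + 3) / (5 * l)))
    (hr₃ : r₃ = Real.sqrt ((2 * l + 3) / 5))
    (s s₁ : ℕ) (hs : 1 ≤ s) (hts : s + 2 * s₁ ≤ 7)
    (f : MvPolynomial (Fin 3) ℝ) (hf : f.IsHomogeneous s)
    (hharm : ∑ i : Fin 3, pderiv i (pderiv i f) = 0) :
    (∑ i : Fin 3, ((1 : ℝ) * (1 : ℝ) ^ (2 * s₁) * eval (Pi.single i (1 : ℝ)) f
        + (1 : ℝ) * (1 : ℝ) ^ (2 * s₁) * eval (-(Pi.single i (1 : ℝ))) f))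
      + ∑ x ∈ boxLayer 3 2,
          (100 * l ^ 3 / (2 * l + 3) ^ 3) * r₂ ^ (2 * s₁) *
            eval (fun i => r₂ / Real.sqrt 2 * x i) f
      + ∑ ε ∈ Fintype.piFinset (fun _ : Fin 3 => ({-1, 1} : Finset ℝ)),
          (675 / (8 * (2 * l + 3) ^ 3)) * r₃ ^ (2 * s₁) *
            eval (fun i => r₃ / Real.sqrt 3 * ε i) f
      = 0 := by
  have hP : 0 ≤ 2 * l + 3 := by linarith
  have hr₂sq : r₂ ^ 2 = (2 * l + 3) / (5 * l) := by
    rw [hr₂, Real.sq_sqrt (div_nonneg hP (by linarith))]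
  have hr₃sq : r₃ ^ 2 = (2 * l + 3) / 5 := by
    rw [hr₃, Real.sq_sqrt (by linarith)]
  simp only [one_pow, one_mul]
  rw [sum_eval_octahedron_cuboctahedron_cube hf]
  obtain ⟨κ, hκ⟩ := exists_octCuboctCubeMoment_eq_mul_prod_gaussMoment hl hr₂sq hr₃sq hs hts
  exact sum_coeff_mul_eq_zero_of_eq_mul_gaussMoment hf (by omega) hharm hκ

open MvPolynomial in
/-- The union of the octahedron (weight 1), the cuboctahedron `(r₂/√2)·I³₂`
(weight `100λ³/(2λ+3)³`, `r₂ = √((2λ+3)/(5λ))`) and the cube `(r₃/√3)·{-1,1}³`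
(weight `675/(8(2λ+3)³)`, `r₃ = √((2λ+3)/5)`) is a Euclidean 7-design of 26
points in `ℝ³` (Neumaier–Seidel criterion). -/
theorem oct_cuboct_cube_tight_7design (l : ℝ) (hl : 0 < l) (hl1 : l ≠ 1)
    (r₂ r₃ : ℝ) (hr₂ : r₂ = Real.sqrt ((2 * l + 3) / (5 * l)))
    (hr₃ : r₃ = Real.sqrt ((2 * l + 3) / 5))
    (s s₁ : ℕ) (hs : 1 ≤ s) (hts : s + 2 * s₁ ≤ 7)
    (f : MvPolynomial (Fin 3) ℝ) (hf : f.IsHomogeneous s)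
    (hharm : ∑ i : Fin 3, pderiv i (pderiv i f) = 0) :
    (∑ i : Fin 3, ((1 : ℝ) * (1 : ℝ) ^ (2 * s₁) * eval (Pi.single i (1 : ℝ)) f
        + (1 : ℝ) * (1 : ℝ) ^ (2 * s₁) * eval (-(Pi.single i (1 : ℝ))) f))
      + ∑ x ∈ boxLayer 3 2,
          (100 * l ^ 3 / (2 * l + 3) ^ 3) * r₂ ^ (2 * s₁) *
            eval (fun i => r₂ / Real.sqrt 2 * x i) f
      + ∑ ε ∈ Fintype.piFinset (fun _ : Fin 3 => ({-1, 1} : Finset ℝ)),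
          (675 / (8 * (2 * l + 3) ^ 3)) * r₃ ^ (2 * s₁) *
            eval (fun i => r₃ / Real.sqrt 3 * ε i) f
      = 0 :=
  oct_cuboct_cube_tight_7design_general l hl r₂ r₃ hr₂ hr₃ s s₁ hs hts f hf hharm
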